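/- A Hausdorff topological group G is ω-balanced and a strong q-space if and only if for each open neighborhood O of the identity in G there is a closed sequentially compact invariant (normal) subgroup H, having a countable base {V_n : n ∈ ω} of open neighborhoods of H in G such that H ⊆ O and {V_n : n ∈ ω} is a strong q-sequence at each point y ∈ H, such that the canonical quotient mapping p : G → G/H is strongly sequential-perfect and the quotient space G/H is metrizable. -/

import Mathlib

open Filter Topology Set Pointwise TopologicalSpace

universe u

section Defs

variable {X : Type*}

/-- A subset `s` of a topological space is countably compact (in the ambient space) if every
countable open cover of `s` (indexed by `ℕ`) has a finite subcover. -/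
def IsCountablyCompactIn [TopologicalSpace X] (s : Set X) : Prop :=
  ∀ U : ℕ → Set X, (∀ n, IsOpen (U n)) → s ⊆ ⋃ n, U n → ∃ t : Finset ℕ, s ⊆ ⋃ n ∈ t, U n

/-- `U` is a q-sequence at `x`: a sequence of open neighbourhoods of `x` such that every
sequence of points chosen from the `U n` has an accumulation (cluster) point in `X`. -/
def IsQSequenceAt [TopologicalSpace X] (x : X) (U : ℕ → Set X) : Prop :=
  (∀ n, IsOpen (U n) ∧ x ∈ U n) ∧
    ∀ u : ℕ → X, (∀ n, u n ∈ U n) → ∃ p : X, MapClusterPt p Filter.atTop u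

/-- A space is a q-space if every point has a q-sequence. -/
def QSpace (X : Type*) [TopologicalSpace X] : Prop :=
  ∀ x : X, ∃ U : ℕ → Set X, IsQSequenceAt x U

/-- A space is a strict q-space if every point has a q-sequence whose intersection is
sequentially compact. -/
def StrictQSpace (X : Type*) [TopologicalSpace X] : Prop :=
  ∀ x : X, ∃ U : ℕ → Set X, IsQSequenceAt x U ∧ IsSeqCompact (⋂ n, U n)

/-- `U` is a strong q-sequence at `x`: a sequence of open neighbourhoods of `x` such that every
sequence of points chosen from the `U n` has a convergent subsequence. -/
def IsStrongQSequenceAt [TopologicalSpace X] (x : X) (U : ℕ → Set X) : Prop :=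
  (∀ n, IsOpen (U n) ∧ x ∈ U n) ∧
    ∀ u : ℕ → X, (∀ n, u n ∈ U n) →
      ∃ (p : X) (φ : ℕ → ℕ), StrictMono φ ∧ Filter.Tendsto (u ∘ φ) Filter.atTop (nhds p)

/-- A space is a strong q-space if every point has a strong q-sequence. -/
def StrongQSpace (X : Type*) [TopologicalSpace X] : Prop :=
  ∀ x : X, ∃ U : ℕ → Set X, IsStrongQSequenceAt x U

/-- A subset `A` is of countable character in `X` if there is a countable family of open
neighbourhoods of `A` such that every open neighbourhood of `A` contains a member of it. -/
def HasCountableCharacter [TopologicalSpace X] (A : Set X) : Prop :=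
  ∃ U : ℕ → Set X, (∀ n, IsOpen (U n) ∧ A ⊆ U n) ∧
    ∀ W : Set X, IsOpen W → A ⊆ W → ∃ n, U n ⊆ W

/-- A topological group is ω-balanced if for every neighbourhood `U` of the identity there is
a countable family `γ` of open neighbourhoods of the identity such that for every `x` some
`V ∈ γ` satisfies `xVx⁻¹ ⊆ U`. -/
def OmegaBalanced (G : Type*) [Group G] [TopologicalSpace G] : Prop :=
  ∀ U : Set G, U ∈ nhds (1 : G) → ∃ γ : Set (Set G), γ.Countable ∧
    (∀ V ∈ γ, IsOpen V ∧ (1 : G) ∈ V) ∧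
    ∀ x : G, ∃ V ∈ γ, ∀ v ∈ V, x * v * x⁻¹ ∈ U

/-- A topological group is ω-narrow if for every open neighbourhood `V` of the identity there
is a countable set `A` with `A * V = G`. -/
def OmegaNarrow (G : Type*) [Group G] [TopologicalSpace G] : Prop :=
  ∀ V : Set G, IsOpen V → (1 : G) ∈ V → ∃ A : Set G, A.Countable ∧ A * V = Set.univ

/-- A topological group is feathered if it has a nonempty compact subset of countable
character. -/
def IsFeathered (G : Type*) [Group G] [TopologicalSpace G] : Prop :=
  ∃ K : Set G, K.Nonempty ∧ IsCompact K ∧ HasCountableCharacter K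

/-- A subgroup `H` of a topological group is neutral if for every open neighbourhood `U` of the
identity there is an open neighbourhood `V` of the identity with `HV ⊆ UH`. -/
def IsNeutralSubgroup {G : Type*} [Group G] [TopologicalSpace G] (H : Subgroup G) : Prop :=
  ∀ U : Set G, IsOpen U → (1 : G) ∈ U →
    ∃ V : Set G, IsOpen V ∧ (1 : G) ∈ V ∧ (H : Set G) * V ⊆ U * (H : Set G)

end Defs

/-!
From ω-balancedness and a strong q-sequence `U` at `1`, a diagonal recursion produces open
symmetric neighbourhoods `W n ⊆ U n ∩ O` of `1` with `W (n + 1) * W (n + 1) ⊆ W n` such that each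
conjugate `x⁻¹ (W n) x` contains some `W m`. Then `H = ⋂ n, W n` is a closed normal subgroup.
Since `W n ⊆ U n`, every sequence with `z n ∈ W n` has a convergent subsequence, and its limit lies
in every `closure (W (n + 1)) ⊆ W n`, hence in `H`. This one compactness property shows that the
`W n` form a base at `H`; with `W (n + 1) * H ⊆ W n` it makes the quotient map closed and
sequentially perfect, and `G ⧸ H` a first countable T₀ group, hence metrizable.

Conversely, if a normal subgroup `H ⊆ O` has a countable base `V n`, then for every `x` the open
set `x⁻¹ O x` contains `H`, hence some `V n`: this is ω-balancedness. A strong q-sequence at `1`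
is translated to every point.
-/

theorem IsStrongQSequenceAt.mono {X : Type*} [TopologicalSpace X] {x y : X} {U V : ℕ → Set X}
    (hU : IsStrongQSequenceAt x U) (hV : ∀ n, IsOpen (V n) ∧ y ∈ V n) (hVU : ∀ n, V n ⊆ U n) :
    IsStrongQSequenceAt y V :=
  ⟨hV, fun u hu => hU.2 u fun n => hVU n (hu n)⟩

theorem IsStrongQSequenceAt.preimage_homeomorph {X Y : Type*} [TopologicalSpace X]
    [TopologicalSpace Y] (e : X ≃ₜ Y) {x : X} {U : ℕ → Set Y}
    (hU : IsStrongQSequenceAt (e x) U) : IsStrongQSequenceAt x fun n => e ⁻¹' U n := by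
  refine ⟨fun n => ⟨(hU.1 n).1.preimage e.continuous, (hU.1 n).2⟩, fun u hu => ?_⟩
  obtain ⟨p, φ, hφ, hlim⟩ := hU.2 (e ∘ u) hu
  refine ⟨e.symm p, φ, hφ, ?_⟩
  simpa [Function.comp_def] using (e.symm.continuous.tendsto p).comp hlim

section DiagonalShrink

variable {α : Type*} (s : Set α → Set α) (c : Set α → ℕ → Set α) (U : ℕ → Set α)

/-- `W (n + 1)` shrinks `W n ∩ U (n + 1) ∩ c (W i) k`, where `n` encodes the pair `(i, k)`, so that
every `c (W i) k` contains some `W m`. -/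
def diagonalShrink : ℕ → Set α
  | 0 => s (U 0)
  | n + 1 => s (diagonalShrink n ∩ U (n + 1) ∩ c (diagonalShrink n.unpair.1) n.unpair.2)
decreasing_by all_goals grind [Nat.unpair_left_le]

theorem diagonalShrink_mem {f : Filter α} (hs : ∀ S ∈ f, s S ∈ f) (hc : ∀ S ∈ f, ∀ k, c S k ∈ f)
    (hU : ∀ n, U n ∈ f) (n : ℕ) : diagonalShrink s c U n ∈ f := by
  induction n using Nat.strong_induction_on with
  | _ n ih =>
    cases n with
    | zero => rw [diagonalShrink]; exact hs _ (hU 0)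
    | succ n =>
      rw [diagonalShrink]
      exact hs _ (inter_mem (inter_mem (ih n n.lt_succ_self) (hU _))
        (hc _ (ih _ (Nat.lt_succ_of_le (Nat.unpair_left_le n))) _))

end DiagonalShrink

section TopologicalGroup

variable {G : Type*} [Group G] [TopologicalSpace G]

structure IsNormalChain (W : ℕ → Set G) : Prop where
  isOpen : ∀ n, IsOpen (W n)
  one_mem : ∀ n, (1 : G) ∈ W n
  inv_mem : ∀ n, ∀ a ∈ W n, a⁻¹ ∈ W n
  mul_mem : ∀ n, ∀ a ∈ W (n + 1), ∀ b ∈ W (n + 1), a * b ∈ W n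
  exists_conj_mem : ∀ (x : G) (n : ℕ), ∃ m, ∀ a ∈ W m, x * a * x⁻¹ ∈ W n

theorem OmegaBalanced.exists_seq_conj_subset (hG : OmegaBalanced G) {S : Set G}
    (hS : S ∈ 𝓝 (1 : G)) :
    ∃ c : ℕ → Set G, (∀ k, c k ∈ 𝓝 (1 : G)) ∧ ∀ x : G, ∃ k, ∀ a ∈ c k, x * a * x⁻¹ ∈ S := by
  obtain ⟨γ, hγ, hγnhds, hγconj⟩ := hG S hS
  obtain ⟨c, rfl⟩ := hγ.exists_eq_range ⟨_, (hγconj 1).choose_spec.1⟩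
  refine ⟨c, fun k => ?_, fun x => ?_⟩
  · obtain ⟨hco, hc1⟩ := hγnhds _ (mem_range_self k)
    exact hco.mem_nhds hc1
  · obtain ⟨_, ⟨k, rfl⟩, hk⟩ := hγconj x
    exact ⟨k, hk⟩

variable [IsTopologicalGroup G]

theorem exists_open_nhds_one_inv_mem_mul_subset {S : Set G} (hS : S ∈ 𝓝 (1 : G)) :
    ∃ V : Set G, IsOpen V ∧ (1 : G) ∈ V ∧ (∀ a ∈ V, a⁻¹ ∈ V) ∧ ∀ a ∈ V, ∀ b ∈ V, a * b ∈ S := by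
  obtain ⟨V, hVo, hV1, hVS⟩ := exists_open_nhds_one_mul_subset hS
  refine ⟨V ∩ V⁻¹, hVo.inter hVo.inv, ⟨hV1, by simpa using hV1⟩, fun a ha => ?_,
    fun a ha b hb => hVS (mul_mem_mul ha.1 hb.1)⟩
  simpa [and_comm] using ha

theorem OmegaBalanced.exists_isNormalChain_subset (hG : OmegaBalanced G) {U : ℕ → Set G}
    (hU : ∀ n, U n ∈ 𝓝 (1 : G)) : ∃ W, IsNormalChain W ∧ ∀ n, W n ⊆ U n := by
  choose! s hs_open hs_one hs_inv hs_mul using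
    fun S (hS : S ∈ 𝓝 (1 : G)) => exists_open_nhds_one_inv_mem_mul_subset hS
  choose! c hc_nhds hc_conj using fun S (hS : S ∈ 𝓝 (1 : G)) => hG.exists_seq_conj_subset hS
  have hs_nhds : ∀ S ∈ 𝓝 (1 : G), s S ∈ 𝓝 (1 : G) := fun S hS =>
    (hs_open S hS).mem_nhds (hs_one S hS)
  have hs_sub : ∀ S ∈ 𝓝 (1 : G), s S ⊆ S := fun S hS a ha => by
    simpa using hs_mul S hS a ha 1 (hs_one S hS)
  set W := diagonalShrink s c U
  have hW : ∀ n, W n ∈ 𝓝 (1 : G) := diagonalShrink_mem s c U hs_nhds hc_nhds hU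
  let B : ℕ → Set G
    | 0 => U 0
    | n + 1 => W n ∩ U (n + 1) ∩ c (W n.unpair.1) n.unpair.2
  have hWB : ∀ n, W n = s (B n) := by
    rintro (_ | n) <;> simp only [W, B] <;> rw [diagonalShrink]
  have hB : ∀ n, B n ∈ 𝓝 (1 : G)
    | 0 => hU 0
    | n + 1 => inter_mem (inter_mem (hW n) (hU _)) (hc_nhds _ (hW _) _)
  have hWsub : ∀ n, W (n + 1) ⊆ W n ∩ U (n + 1) ∩ c (W n.unpair.1) n.unpair.2 := fun n =>
    hWB (n + 1) ▸ hs_sub _ (hB (n + 1))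
  refine ⟨W, ⟨fun n => ?_, fun n => ?_, fun n => ?_, fun n a ha b hb => ?_, fun x n => ?_⟩,
    fun n => ?_⟩
  · exact hWB n ▸ hs_open _ (hB n)
  · exact hWB n ▸ hs_one _ (hB n)
  · exact hWB n ▸ hs_inv _ (hB n)
  · rw [hWB] at ha hb
    exact (hs_mul (B (n + 1)) (hB (n + 1)) a ha b hb).1.1
  · obtain ⟨k, hk⟩ := hc_conj _ (hW n) x
    refine ⟨Nat.pair n k + 1, fun a ha => hk a ?_⟩
    simpa using (hWsub _ ha).2
  · cases n with
    | zero => exact hWB 0 ▸ hs_sub _ (hU 0)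
    | succ n => exact (hWsub n).trans (inter_subset_left.trans inter_subset_right)

theorem omegaBalanced_of_forall_exists_normal_subset (h : ∀ O : Set G, IsOpen O → (1 : G) ∈ O →
      ∃ H : Subgroup G, H.Normal ∧ (H : Set G) ⊆ O ∧ HasCountableCharacter (H : Set G)) :
    OmegaBalanced G := by
  intro U hU
  obtain ⟨O, hOU, hO, h1O⟩ := mem_nhds_iff.1 hU
  obtain ⟨H, hH, hHO, V, hV, hVH⟩ := h O hO h1O
  refine ⟨range V, countable_range V, forall_mem_range.2 fun n => ⟨(hV n).1, (hV n).2 H.one_mem⟩,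
    fun x => ?_⟩
  obtain ⟨n, hn⟩ := hVH ((fun a => x * a * x⁻¹) ⁻¹' O) (hO.preimage (by fun_prop))
    fun a ha => hHO (hH.conj_mem a ha x)
  exact ⟨V n, mem_range_self n, fun a ha => hOU (hn ha)⟩

theorem strongQSpace_of_isStrongQSequenceAt_one {U : ℕ → Set G}
    (hU : IsStrongQSequenceAt (1 : G) U) : StrongQSpace G := fun x =>
  ⟨_, IsStrongQSequenceAt.preimage_homeomorph (Homeomorph.mulLeft x⁻¹) (by simpa using hU)⟩

theorem QuotientGroup.isClosedMap_mk_of_forall_exists_mul_subset {H : Subgroup G}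
    (h : ∀ S : Set G, IsOpen S → (H : Set G) ⊆ S → ∃ V ∈ 𝓝 (1 : G), V * H ⊆ S) :
    IsClosedMap (QuotientGroup.mk : G → G ⧸ H) := by
  intro F hF
  refine isOpen_compl_iff.1 (isOpen_iff_mem_nhds.2 fun x hx => ?_)
  obtain ⟨g, rfl⟩ := QuotientGroup.mk_surjective x
  have hHS : (H : Set G) ⊆ (g * ·) ⁻¹' Fᶜ := fun a ha hga =>
    hx ⟨g * a, hga, QuotientGroup.mk_mul_of_mem g ha⟩
  obtain ⟨V, hV, hVS⟩ := h _ (hF.isOpen_compl.preimage (continuous_const_mul g)) hHS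
  have hgV : (g * ·) '' V ∈ 𝓝 g := by
    simpa using (isOpenMap_mul_left g).image_mem_nhds hV
  refine mem_of_superset (QuotientGroup.isOpenMap_coe.image_mem_nhds hgV) ?_
  rintro _ ⟨_, ⟨v, hv, rfl⟩, rfl⟩ ⟨f, hf, hfv⟩
  have hvf := hVS (mul_mem_mul hv (QuotientGroup.eq.1 hfv.symm))
  exact hvf (by simpa [mul_assoc] using hf)

theorem QuotientGroup.firstCountableTopology_of_hasCountableCharacter {H : Subgroup G}
    (hH : HasCountableCharacter (H : Set G)) : FirstCountableTopology (G ⧸ H) := by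
  obtain ⟨V, hV, hVH⟩ := hH
  have hbasis : (𝓝 ((1 : G) : G ⧸ H)).HasBasis (fun _ => True)
      fun n => (QuotientGroup.mk '' V n : Set (G ⧸ H)) := by
    refine ⟨fun T => ⟨fun hT => ?_, fun ⟨n, _, hn⟩ => mem_of_superset ?_ hn⟩⟩
    · obtain ⟨T', hT'T, hT'o, h1⟩ := mem_nhds_iff.1 hT
      obtain ⟨n, hn⟩ := hVH _ (hT'o.preimage QuotientGroup.continuous_mk) fun a ha => by
        rwa [mem_preimage, QuotientGroup.eq.2 (by simpa using ha : a⁻¹ * 1 ∈ H)]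
      exact ⟨n, trivial, (image_mono hn).trans ((image_preimage_subset _ _).trans hT'T)⟩
    · exact (QuotientGroup.isOpenMap_coe _ (hV n).1).mem_nhds ⟨1, (hV n).2 H.one_mem, rfl⟩
  refine ⟨fun x => ?_⟩
  obtain ⟨g, rfl⟩ := QuotientGroup.mk_surjective x
  have := hbasis.isCountablyGenerated
  rw [show ((g : G) : G ⧸ H) = Homeomorph.smul g ((1 : G) : G ⧸ H) by simp,
    ← Homeomorph.map_nhds_eq]
  infer_instance

theorem IsTopologicalGroup.metrizableSpace_of_firstCountableTopology [T0Space G]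
    [FirstCountableTopology G] : MetrizableSpace G := by
  let := IsTopologicalGroup.rightUniformSpace G
  have : (uniformity G).IsCountablyGenerated := Filter.comap.isCountablyGenerated _ _
  exact UniformSpace.metrizableSpace

end TopologicalGroup

namespace IsNormalChain

section

variable {G : Type*} [Group G] [TopologicalSpace G] {W : ℕ → Set G}

theorem succ_subset (hW : IsNormalChain W) (n : ℕ) : W (n + 1) ⊆ W n := fun a ha => by
  simpa using hW.mul_mem n a ha 1 (hW.one_mem _)

theorem antitone (hW : IsNormalChain W) : Antitone W :=
  antitone_nat_of_succ_le hW.succ_subset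

def subgroup (hW : IsNormalChain W) : Subgroup G where
  carrier := ⋂ n, W n
  one_mem' := mem_iInter.2 hW.one_mem
  mul_mem' ha hb := mem_iInter.2 fun n =>
    hW.mul_mem n _ (mem_iInter.1 ha (n + 1)) _ (mem_iInter.1 hb (n + 1))
  inv_mem' ha := mem_iInter.2 fun n => hW.inv_mem n _ (mem_iInter.1 ha n)

theorem mem_subgroup (hW : IsNormalChain W) {a : G} : a ∈ hW.subgroup ↔ ∀ n, a ∈ W n :=
  mem_iInter

theorem subgroup_subset (hW : IsNormalChain W) (n : ℕ) : (hW.subgroup : Set G) ⊆ W n :=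
  fun _ ha => hW.mem_subgroup.1 ha n

instance normal_subgroup (hW : IsNormalChain W) : hW.subgroup.Normal :=
  ⟨fun a ha x => hW.mem_subgroup.2 fun n =>
    let ⟨m, hm⟩ := hW.exists_conj_mem x n
    hm a (hW.mem_subgroup.1 ha m)⟩

theorem mul_subgroup_subset (hW : IsNormalChain W) (n : ℕ) :
    W (n + 1) * hW.subgroup ⊆ W n :=
  mul_subset_iff.2 fun a ha _ hb => hW.mul_mem n a ha _ (hW.subgroup_subset _ hb)

end

variable {G : Type*} [Group G] [TopologicalSpace G] [IsTopologicalGroup G] {W : ℕ → Set G}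

theorem closure_succ_subset (hW : IsNormalChain W) (n : ℕ) : closure (W (n + 1)) ⊆ W n :=
  closure_subset_of_mem_nhds_one_of_inv_mul_left_subset
    ((hW.isOpen _).mem_nhds (hW.one_mem _)) (hW.inv_mem _) (mul_subset_iff.2 (hW.mul_mem n))

theorem isClosed_subgroup (hW : IsNormalChain W) : IsClosed (hW.subgroup : Set G) :=
  isClosed_of_closure_subset fun _ ha => hW.mem_subgroup.2 fun n =>
    hW.closure_succ_subset n (closure_mono (hW.subgroup_subset _) ha)

theorem mem_subgroup_of_tendsto (hW : IsNormalChain W) {ι : Type*} {l : Filter ι} [l.NeBot]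
    {z : ι → G} {q : G} (hz : ∀ n, ∀ᶠ i in l, z i ∈ W n) (hq : Tendsto z l (𝓝 q)) :
    q ∈ hW.subgroup :=
  hW.mem_subgroup.2 fun n => hW.closure_succ_subset n (mem_closure_of_tendsto hq (hz (n + 1)))

theorem eventually_mem_of_tendsto_mk (hW : IsNormalChain W) {ι : Type*} {l : Filter ι}
    {z : ι → G} (hz : Tendsto (fun i => (z i : G ⧸ hW.subgroup)) l (𝓝 1)) (n : ℕ) :
    ∀ᶠ i in l, z i ∈ W n := by
  have hopen : IsOpen (QuotientGroup.mk '' W (n + 1) : Set (G ⧸ hW.subgroup)) :=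
    QuotientGroup.isOpenMap_coe _ (hW.isOpen _)
  filter_upwards [hz.eventually_mem (hopen.mem_nhds ⟨1, hW.one_mem _, rfl⟩)]
    with i ⟨a, ha, hai⟩
  simpa using hW.mul_subgroup_subset n (mul_mem_mul ha (QuotientGroup.eq.1 hai))

theorem exists_subseq_tendsto (hW : IsNormalChain W) (hq : IsStrongQSequenceAt 1 W)
    {z : ℕ → G} (hz : ∀ n, z n ∈ W n) :
    ∃ q ∈ hW.subgroup, ∃ φ : ℕ → ℕ, StrictMono φ ∧ Tendsto (z ∘ φ) atTop (𝓝 q) := by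
  obtain ⟨q, φ, hφ, hlim⟩ := hq.2 z hz
  refine ⟨q, hW.mem_subgroup_of_tendsto (fun n => ?_) hlim, φ, hφ, hlim⟩
  filter_upwards [eventually_ge_atTop n] with k hk
  exact hW.antitone (hk.trans hφ.le_apply) (hz (φ k))

theorem exists_subset_of_subgroup_subset (hW : IsNormalChain W) (hq : IsStrongQSequenceAt 1 W)
    {S : Set G} (hS : IsOpen S) (hHS : (hW.subgroup : Set G) ⊆ S) : ∃ n, W n ⊆ S := by
  by_contra! h
  choose z hzW hzS using fun n => not_subset.1 (h n)
  obtain ⟨q, hqH, φ, -, hlim⟩ := hW.exists_subseq_tendsto hq hzW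
  obtain ⟨k, hk⟩ := (hlim.eventually_mem (hS.mem_nhds (hHS hqH))).exists
  exact hzS _ hk

theorem hasCountableCharacter (hW : IsNormalChain W) (hq : IsStrongQSequenceAt 1 W) :
    HasCountableCharacter (hW.subgroup : Set G) :=
  ⟨W, fun n => ⟨hW.isOpen n, hW.subgroup_subset n⟩,
    fun _ hS hHS => hW.exists_subset_of_subgroup_subset hq hS hHS⟩

theorem isSeqCompact_subgroup (hW : IsNormalChain W) (hq : IsStrongQSequenceAt 1 W) :
    IsSeqCompact (hW.subgroup : Set G) :=
  fun _ hz => hW.exists_subseq_tendsto hq fun n => hW.subgroup_subset n (hz n)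

theorem isClosedMap_mk (hW : IsNormalChain W) (hq : IsStrongQSequenceAt 1 W) :
    IsClosedMap (QuotientGroup.mk : G → G ⧸ hW.subgroup) :=
  QuotientGroup.isClosedMap_mk_of_forall_exists_mul_subset fun _ hS hHS =>
    let ⟨n, hn⟩ := hW.exists_subset_of_subgroup_subset hq hS hHS
    ⟨W (n + 1), (hW.isOpen _).mem_nhds (hW.one_mem _), (hW.mul_subgroup_subset n).trans hn⟩

theorem isSeqCompact_preimage_mk (hW : IsNormalChain W) (hq : IsStrongQSequenceAt 1 W)
    {F : Set (G ⧸ hW.subgroup)} (hF : IsSeqCompact F) :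
    IsSeqCompact (QuotientGroup.mk ⁻¹' F) := by
  intro x hx
  obtain ⟨y₀, hyF, φ, hφ, hlim⟩ := hF (x := fun n => (x n : G ⧸ hW.subgroup)) hx
  obtain ⟨y, rfl⟩ := QuotientGroup.mk_surjective y₀
  have hlim₁ : Tendsto (fun k => ((y⁻¹ * x (φ k) : G) : G ⧸ hW.subgroup)) atTop (𝓝 1) := by
    simpa using (tendsto_const_nhds (x := ((y : G ⧸ hW.subgroup))⁻¹)).mul hlim
  obtain ⟨ψ, hψ, hψW⟩ := extraction_forall_of_eventually (hW.eventually_mem_of_tendsto_mk hlim₁)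
  obtain ⟨q, hqH, χ, hχ, hlimq⟩ := hW.exists_subseq_tendsto hq hψW
  refine ⟨y * q, ?_, φ ∘ ψ ∘ χ, hφ.comp (hψ.comp hχ), ?_⟩
  · rwa [mem_preimage, QuotientGroup.mk_mul_of_mem y hqH]
  · simpa [Function.comp_def] using hlimq.const_mul y

theorem metrizableSpace_quotient (hW : IsNormalChain W) (hq : IsStrongQSequenceAt 1 W) :
    MetrizableSpace (G ⧸ hW.subgroup) := by
  have := hW.isClosed_subgroup
  have := QuotientGroup.firstCountableTopology_of_hasCountableCharacter
    (hW.hasCountableCharacter hq)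
  exact IsTopologicalGroup.metrizableSpace_of_firstCountableTopology

end IsNormalChain

theorem omegaBalanced_and_strongQSpace_iff_general (G : Type*) [Group G] [TopologicalSpace G] [IsTopologicalGroup G] :
    (OmegaBalanced G ∧ StrongQSpace G) ↔
      ∀ O : Set G, IsOpen O → (1 : G) ∈ O →
        ∃ (H : Subgroup G) (V : ℕ → Set G), H.Normal ∧ IsClosed (H : Set G) ∧
          IsSeqCompact (H : Set G) ∧
          (∀ n, IsOpen (V n) ∧ (H : Set G) ⊆ V n) ∧
          (∀ W : Set G, IsOpen W → (H : Set G) ⊆ W → ∃ n, V n ⊆ W) ∧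
          (H : Set G) ⊆ O ∧
          (∀ y ∈ (H : Set G), IsStrongQSequenceAt y V) ∧
          IsClosedMap (QuotientGroup.mk : G → G ⧸ H) ∧
          (∀ F : Set (G ⧸ H), IsSeqCompact F →
            IsSeqCompact ((QuotientGroup.mk : G → G ⧸ H) ⁻¹' F)) ∧
          MetrizableSpace (G ⧸ H) := by
  refine ⟨fun ⟨hG, hQ⟩ O hO h1O => ?_, fun h => ⟨?_, ?_⟩⟩
  · obtain ⟨U, hU⟩ := hQ 1
    obtain ⟨W, hW, hWU⟩ := hG.exists_isNormalChain_subset (U := fun n => U n ∩ O)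
      fun n => inter_mem ((hU.1 n).1.mem_nhds (hU.1 n).2) (hO.mem_nhds h1O)
    have hq : IsStrongQSequenceAt 1 W :=
      hU.mono (fun n => ⟨hW.isOpen n, hW.one_mem n⟩) fun n => (hWU n).trans inter_subset_left
    exact ⟨hW.subgroup, W, hW.normal_subgroup, hW.isClosed_subgroup, hW.isSeqCompact_subgroup hq,
      fun n => ⟨hW.isOpen n, hW.subgroup_subset n⟩,
      fun _ => hW.exists_subset_of_subgroup_subset hq,
      (hW.subgroup_subset 0).trans ((hWU 0).trans inter_subset_right),
      fun y hy => hq.mono (fun n => ⟨hW.isOpen n, hW.subgroup_subset n hy⟩) fun _ => subset_rfl,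
      hW.isClosedMap_mk hq, fun _ => hW.isSeqCompact_preimage_mk hq, hW.metrizableSpace_quotient hq⟩
  · exact omegaBalanced_of_forall_exists_normal_subset fun O hO h1O =>
      let ⟨H, V, hH, _, _, hV, hVH, hHO, _⟩ := h O hO h1O
      ⟨H, hH, hHO, V, hV, hVH⟩
  · obtain ⟨H, V, -, -, -, -, -, -, hq, -⟩ := h univ isOpen_univ (mem_univ 1)
    exact strongQSpace_of_isStrongQSequenceAt_one (hq 1 H.one_mem)

theorem omegaBalanced_and_strongQSpace_iff (G : Type*) [Group G] [TopologicalSpace G] [IsTopologicalGroup G] [T2Space G] :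
    (OmegaBalanced G ∧ StrongQSpace G) ↔
      ∀ O : Set G, IsOpen O → (1 : G) ∈ O →
        ∃ (H : Subgroup G) (V : ℕ → Set G), H.Normal ∧ IsClosed (H : Set G) ∧
          IsSeqCompact (H : Set G) ∧
          (∀ n, IsOpen (V n) ∧ (H : Set G) ⊆ V n) ∧
          (∀ W : Set G, IsOpen W → (H : Set G) ⊆ W → ∃ n, V n ⊆ W) ∧
          (H : Set G) ⊆ O ∧
          (∀ y ∈ (H : Set G), IsStrongQSequenceAt y V) ∧
          IsClosedMap (QuotientGroup.mk : G → G ⧸ H) ∧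
          (∀ F : Set (G ⧸ H), IsSeqCompact F →
            IsSeqCompact ((QuotientGroup.mk : G → G ⧸ H) ⁻¹' F)) ∧
          MetrizableSpace (G ⧸ H) :=
  omegaBalanced_and_strongQSpace_iff_general G
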